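/- Let V be an (n+2)-dimensional vector space with nondegenerate symmetric form g, I ∈ V with ι = g(I,I) ≠ 0, and let W be an algebraic Weyl tensor on V. If I^A W_{AB[CD} I_{E]} = 0, then R_{ABCD} := ι W_{ABCD} + (g∧P)_{ABCD} with P_{BD} := -I^A I^C W_{ABCD} is an algebraic curvature tensor satisfying I^A R_{ABCD} = 0 whose trace-free part equals ι W_{ABCD} (up to the one-dimensional kernel ambiguity). Conversely, if W is the trace-free part of an algebraic curvature tensor R with I^A R_{ABCD} = 0, then I^A W_{AB[CD} I_{E]} = 0. -/
import Mathlib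


noncomputable section
open scoped BigOperators

/-- Rank-4 covariant tensors on `ℝ^N`. -/
abbrev T4 (N : ℕ) := Fin N → Fin N → Fin N → Fin N → ℝ

/-- Algebraic curvature tensors (Riemann symmetries). -/
def IsCurv {N : ℕ} (X : T4 N) : Prop :=
  (∀ A B C D, X A B C D = -X B A C D) ∧ (∀ A B C D, X A B C D = -X A B D C) ∧
    (∀ A B C D, X A B C D = X C D A B) ∧
    (∀ A B C D, X A B C D + X B C A D + X C A B D = 0)

/-- The product `(Q∧P)_{ABCD} = Q_{AC}P_{BD} - Q_{BC}P_{AD} + Q_{BD}P_{AC} - Q_{AD}P_{BC}`. -/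
def wedge4 {N : ℕ} (Q P : Fin N → Fin N → ℝ) : T4 N := fun A B C D =>
  Q A C * P B D - Q B C * P A D + Q B D * P A C - Q A D * P B C

/-- Ricci-type contraction `R_{ABC}{}^B` (trace over the 2nd and 4th slots). -/
def ricciT {N : ℕ} (gi : Fin N → Fin N → ℝ) (R : T4 N) : Fin N → Fin N → ℝ :=
  fun A C => ∑ b, ∑ d, gi b d * R A b C d

/-- The tensor `P_{AC} = (1/n)(R_{ABC}{}^B - J g_{AC})`, `J = R_{AB}{}^{AB}/(2(n+1))`,
where the ambient dimension is `N = n+2`. -/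
def schoutenT {N : ℕ} (n : ℕ) (g gi : Fin N → Fin N → ℝ) (R : T4 N) :
    Fin N → Fin N → ℝ := fun A C =>
  (1 / (n : ℝ)) * (ricciT gi R A C
    - ((1 / (2 * ((n : ℝ) + 1))) * ∑ a, ∑ c, gi a c * ricciT gi R a c) * g A C)

/-- The totally trace-free (Weyl) part `R̊ = R - g∧P` of an algebraic curvature
tensor. -/
def tfT {N : ℕ} (n : ℕ) (g gi : Fin N → Fin N → ℝ) (R : T4 N) : T4 N :=
  fun A B C D => R A B C D - wedge4 g (schoutenT n g gi R) A B C D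
section helpers
variable {N : ℕ}

lemma contract_sum (gi g : Fin N → Fin N → ℝ)
    (h : ∀ a b, (∑ c, gi a c * g c b) = if a = b then (1 : ℝ) else 0)
    (a : Fin N) (f : Fin N → ℝ) :
    (∑ c, (∑ x, gi a x * g x c) * f c) = f a := by
  simp [h]

lemma sum_sum_antisym (I : Fin N → ℝ) (f : Fin N → Fin N → ℝ)
    (hf : ∀ a b, f a b = -f b a) :
    (∑ a, ∑ b, I a * I b * f a b) = 0 := by
  have h1 : (∑ a, ∑ b, I a * I b * f a b) = -∑ a, ∑ b, I a * I b * f b a := by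
    rw [← Finset.sum_neg_distrib]
    refine Finset.sum_congr rfl fun a _ => ?_
    rw [← Finset.sum_neg_distrib]
    refine Finset.sum_congr rfl fun b _ => ?_
    rw [hf a b]; ring
  have h2 : (∑ a, ∑ b, I a * I b * f b a) = ∑ a, ∑ b, I a * I b * f a b := by
    rw [Finset.sum_comm]
    exact Finset.sum_congr rfl fun a _ => Finset.sum_congr rfl fun b _ => by ring
  rw [h2] at h1
  linarith

lemma wedge_curv (Q P : Fin N → Fin N → ℝ) (hQ : ∀ a b, Q a b = Q b a)
    (hP : ∀ a b, P a b = P b a) : IsCurv (wedge4 Q P) := by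
  refine ⟨fun A B C D => by simp only [wedge4]; ring,
    fun A B C D => by simp only [wedge4]; ring,
    fun A B C D => by simp only [wedge4]; rw [hQ A C, hQ B C, hQ B D, hQ A D, hP A C, hP B C, hP B D, hP A D]; ring,
    fun A B C D => by simp only [wedge4]; rw [hQ A C, hQ B C, hQ A B, hP A C, hP B C, hP A B]; ring⟩

end helpers
open Matrix in
lemma gi_facts {N : ℕ} (g gi : Fin N → Fin N → ℝ) (hgsymm : ∀ a b, g a b = g b a)
    (hginv : ∀ a b, (∑ c, gi a c * g c b) = if a = b then (1 : ℝ) else 0) :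
    (∀ a b, gi a b = gi b a) ∧
      (∀ a b, (∑ c, g a c * gi c b) = if a = b then (1 : ℝ) else 0) := by
  set G : Matrix (Fin N) (Fin N) ℝ := Matrix.of g with hG
  set Gi : Matrix (Fin N) (Fin N) ℝ := Matrix.of gi with hGi
  have h1 : Gi * G = 1 := by
    ext a b
    simp [Matrix.mul_apply, hG, hGi, Matrix.one_apply, hginv a b]
  have h2 : G * Gi = 1 := mul_eq_one_comm.mp h1
  have hGT : Gᵀ = G := by
    ext a b; simp [Matrix.transpose_apply, hG, hgsymm a b]
  have h3 : Giᵀ * G = 1 := by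
    calc Giᵀ * G = Giᵀ * Gᵀ := by rw [hGT]
      _ = (G * Gi)ᵀ := by rw [Matrix.transpose_mul]
      _ = 1 := by rw [h2, Matrix.transpose_one]
  have h4 : Giᵀ = Gi := by
    calc Giᵀ = Giᵀ * (G * Gi) := by rw [h2, mul_one]
      _ = (Giᵀ * G) * Gi := by rw [mul_assoc]
      _ = Gi := by rw [h3, one_mul]
  constructor
  · intro a b
    have := congrFun (congrFun h4 a) b
    simpa [Matrix.transpose_apply, hGi] using this.symm
  · intro a b
    have := congrFun (congrFun h2 a) b
    simpa [Matrix.mul_apply, hG, hGi, Matrix.one_apply] using this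
lemma trace_g {N : ℕ} (g gi : Fin N → Fin N → ℝ) (hgsymm : ∀ a b, g a b = g b a)
    (hginv : ∀ a b, (∑ c, gi a c * g c b) = if a = b then (1 : ℝ) else 0) :
    (∑ b, ∑ d, gi b d * g b d) = (N : ℝ) := by
  have : ∀ b : Fin N, (∑ d, gi b d * g b d) = 1 := by
    intro b
    have := hginv b b
    simp at this
    rw [← this]
    exact Finset.sum_congr rfl fun d _ => by rw [hgsymm b d]
  simp [this]

lemma ricci_addsm {N : ℕ} (gi : Fin N → Fin N → ℝ) (c : ℝ) (X Y : T4 N) (A C : Fin N) :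
    ricciT gi (fun A B C D => c * X A B C D + Y A B C D) A C
      = c * ricciT gi X A C + ricciT gi Y A C := by
  simp only [ricciT, mul_add, Finset.sum_add_distrib, Finset.mul_sum]
  congr 1
  exact Finset.sum_congr rfl fun b _ => Finset.sum_congr rfl fun d _ => by ring

lemma ricci_wedge {N : ℕ} (g gi P : Fin N → Fin N → ℝ)
    (hgsymm : ∀ a b, g a b = g b a) (hgisymm : ∀ a b, gi a b = gi b a)
    (hginv : ∀ a b, (∑ c, gi a c * g c b) = if a = b then (1 : ℝ) else 0)
    (A C : Fin N) :
    ricciT gi (wedge4 g P) A C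
      = (∑ b, ∑ d, gi b d * P b d) * g A C + ((N : ℝ) - 2) * P A C := by
  have expand : ricciT gi (wedge4 g P) A C
      = ((∑ b, ∑ d, gi b d * (g A C * P b d)) - (∑ b, ∑ d, gi b d * (g b C * P A d))
        + (∑ b, ∑ d, gi b d * (g b d * P A C))) - (∑ b, ∑ d, gi b d * (g A d * P b C)) := by
    simp only [ricciT, wedge4, mul_sub, mul_add, Finset.sum_sub_distrib,
      Finset.sum_add_distrib]
  have t1 : (∑ b, ∑ d, gi b d * (g A C * P b d)) = (∑ b, ∑ d, gi b d * P b d) * g A C := by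
    rw [Finset.sum_mul]
    exact Finset.sum_congr rfl fun b _ => by
      rw [Finset.sum_mul]
      exact Finset.sum_congr rfl fun d _ => by ring
  have t2 : (∑ b, ∑ d, gi b d * (g b C * P A d)) = P A C := by
    rw [Finset.sum_comm]
    have h1 : ∀ d, (∑ b, gi b d * (g b C * P A d)) = (∑ b, gi d b * g b C) * P A d := by
      intro d
      rw [Finset.sum_mul]
      exact Finset.sum_congr rfl fun b _ => by rw [hgisymm b d]; ring
    rw [Finset.sum_congr rfl fun d _ => h1 d]
    simp [hginv]
  have t3 : (∑ b, ∑ d, gi b d * (g b d * P A C)) = (N : ℝ) * P A C := by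
    have h1 : (∑ b, ∑ d, gi b d * (g b d * P A C)) = (∑ b, ∑ d, gi b d * g b d) * P A C := by
      rw [Finset.sum_mul]
      exact Finset.sum_congr rfl fun b _ => by
        rw [Finset.sum_mul]
        exact Finset.sum_congr rfl fun d _ => by ring
    rw [h1, trace_g g gi hgsymm hginv]
  have t4 : (∑ b, ∑ d, gi b d * (g A d * P b C)) = P A C := by
    have h1 : ∀ b, (∑ d, gi b d * (g A d * P b C)) = (∑ d, gi b d * g d A) * P b C := by
      intro b
      rw [Finset.sum_mul]
      exact Finset.sum_congr rfl fun d _ => by rw [hgsymm A d]; ring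
    rw [Finset.sum_congr rfl fun b _ => h1 b]
    simp [hginv]
  rw [expand, t1, t2, t3, t4]; ring

lemma schouten_of (n : ℕ) (hn : 1 ≤ n) (g gi P : Fin (n + 2) → Fin (n + 2) → ℝ)
    (hgsymm : ∀ a b, g a b = g b a)
    (hginv : ∀ a b, (∑ c, gi a c * g c b) = if a = b then (1 : ℝ) else 0)
    (R : T4 (n + 2))
    (hR : ∀ A C, ricciT gi R A C
      = (∑ b, ∑ d, gi b d * P b d) * g A C + (n : ℝ) * P A C) :
    ∀ A C, schoutenT n g gi R A C = P A C := by
  intro A C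
  have hJ : (∑ a, ∑ c, gi a c * ricciT gi R a c)
      = (2 * (n : ℝ) + 2) * (∑ b, ∑ d, gi b d * P b d) := by
    have h1 : ∀ a c, gi a c * ricciT gi R a c
        = (∑ b, ∑ d, gi b d * P b d) * (gi a c * g a c) + (n : ℝ) * (gi a c * P a c) := by
      intro a c; rw [hR a c]; ring
    calc (∑ a, ∑ c, gi a c * ricciT gi R a c)
        = (∑ a, ∑ c, ((∑ b, ∑ d, gi b d * P b d) * (gi a c * g a c)
            + (n : ℝ) * (gi a c * P a c))) :=
          Finset.sum_congr rfl fun a _ => Finset.sum_congr rfl fun c _ => h1 a c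
      _ = (∑ b, ∑ d, gi b d * P b d) * (∑ a, ∑ c, gi a c * g a c)
            + (n : ℝ) * (∑ a, ∑ c, gi a c * P a c) := by
          simp only [Finset.sum_add_distrib, Finset.mul_sum]
      _ = (2 * (n : ℝ) + 2) * (∑ b, ∑ d, gi b d * P b d) := by
          rw [trace_g g gi hgsymm hginv]
          push_cast
          ring
  have hn0 : (n : ℝ) ≠ 0 := Nat.cast_ne_zero.mpr (by omega)
  simp only [schoutenT, hR A C, hJ]
  field_simp
  ring
lemma wedge_contract {N : ℕ} (g P : Fin N → Fin N → ℝ) (I : Fin N → ℝ)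
    (hgsymm : ∀ a b, g a b = g b a) (B C D : Fin N) :
    (∑ A, I A * wedge4 g P A B C D)
      = (∑ e, g C e * I e) * P B D - g B C * (∑ A, I A * P A D)
        + (∑ A, I A * P A C) * g B D - (∑ e, g D e * I e) * P B C := by
  have expand : (∑ A, I A * wedge4 g P A B C D)
      = ((∑ A, I A * (g A C * P B D)) - (∑ A, I A * (g B C * P A D))
        + (∑ A, I A * (g B D * P A C))) - (∑ A, I A * (g A D * P B C)) := by
    simp only [wedge4, mul_sub, mul_add, Finset.sum_sub_distrib, Finset.sum_add_distrib]
  have t1 : (∑ A, I A * (g A C * P B D)) = (∑ e, g C e * I e) * P B D := by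
    rw [Finset.sum_mul]
    exact Finset.sum_congr rfl fun A _ => by rw [hgsymm C A]; ring
  have t2 : (∑ A, I A * (g B C * P A D)) = g B C * (∑ A, I A * P A D) := by
    rw [Finset.mul_sum]
    exact Finset.sum_congr rfl fun A _ => by ring
  have t3 : (∑ A, I A * (g B D * P A C)) = (∑ A, I A * P A C) * g B D := by
    rw [Finset.sum_mul]
    exact Finset.sum_congr rfl fun A _ => by ring
  have t4 : (∑ A, I A * (g A D * P B C)) = (∑ e, g D e * I e) * P B C := by
    rw [Finset.sum_mul]
    exact Finset.sum_congr rfl fun A _ => by rw [hgsymm D A]; ring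
  rw [expand, t1, t2, t3, t4]
lemma curv_add_smul {N : ℕ} (c : ℝ) (X Y : T4 N) (hX : IsCurv X) (hY : IsCurv Y) :
    IsCurv (fun A B C D => c * X A B C D + Y A B C D) := by
  obtain ⟨x1, x2, x3, x4⟩ := hX
  obtain ⟨y1, y2, y3, y4⟩ := hY
  refine ⟨fun A B C D => ?_, fun A B C D => ?_, fun A B C D => ?_, fun A B C D => ?_⟩
  · linear_combination c * x1 A B C D + y1 A B C D
  · linear_combination c * x2 A B C D + y2 A B C D
  · linear_combination c * x3 A B C D + y3 A B C D
  · linear_combination c * x4 A B C D + y4 A B C D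

lemma P_symm {N : ℕ} (I : Fin N → ℝ) (W : T4 N)
    (hW3 : ∀ A B C D, W A B C D = W C D A B) (B D : Fin N) :
    -(∑ A', ∑ C', I A' * I C' * W A' B C' D) = -(∑ A', ∑ C', I A' * I C' * W A' D C' B) := by
  refine neg_inj.mpr ?_
  calc (∑ A', ∑ C', I A' * I C' * W A' B C' D)
      = ∑ A', ∑ C', I A' * I C' * W C' D A' B :=
        Finset.sum_congr rfl fun A' _ => Finset.sum_congr rfl fun C' _ => by
          rw [hW3 A' B C' D]
    _ = ∑ C', ∑ A', I A' * I C' * W C' D A' B := Finset.sum_comm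
    _ = ∑ A', ∑ C', I A' * I C' * W A' D C' B :=
        Finset.sum_congr rfl fun C' _ => Finset.sum_congr rfl fun A' _ => by ring

lemma IP_zero {N : ℕ} (I : Fin N → ℝ) (W : T4 N)
    (hW1 : ∀ A B C D, W A B C D = -W B A C D) (C : Fin N) :
    (∑ A, I A * -(∑ A', ∑ C', I A' * I C' * W A' A C' C)) = 0 := by
  have h : (∑ A, I A * -(∑ A', ∑ C', I A' * I C' * W A' A C' C))
      = -∑ A, ∑ A', I A * I A' * (∑ C', I C' * W A' A C' C) := by
    rw [← Finset.sum_neg_distrib]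
    refine Finset.sum_congr rfl fun A _ => ?_
    have : I A * (∑ A', ∑ C', I A' * I C' * W A' A C' C)
        = ∑ A', I A * I A' * (∑ C', I C' * W A' A C' C) := by
      rw [Finset.mul_sum]
      refine Finset.sum_congr rfl fun A' _ => ?_
      rw [Finset.mul_sum, Finset.mul_sum]
      exact Finset.sum_congr rfl fun C' _ => by ring
    rw [← this]; ring
  rw [h, sum_sum_antisym I (fun a b => ∑ C', I C' * W b a C' C)
    (fun a b => by
      rw [← Finset.sum_neg_distrib]
      exact Finset.sum_congr rfl fun C' _ => by rw [hW1 b a C' C]; ring), neg_zero]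

lemma IIW_contract1 {N : ℕ} (I : Fin N → ℝ) (W : T4 N)
    (hW2 : ∀ A B C D, W A B C D = -W A B D C) (B D : Fin N) :
    (∑ E, I E * (∑ A, I A * W A B D E)) = -(∑ A', ∑ C', I A' * I C' * W A' B C' D) := by
  calc (∑ E, I E * (∑ A, I A * W A B D E))
      = ∑ E, ∑ A, I A * I E * W A B D E := Finset.sum_congr rfl fun E _ => by
        rw [Finset.mul_sum]; exact Finset.sum_congr rfl fun A _ => by ring
    _ = ∑ A, ∑ E, I A * I E * W A B D E := Finset.sum_comm
    _ = -(∑ A, ∑ E, I A * I E * W A B E D) := by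
        rw [← Finset.sum_neg_distrib]
        refine Finset.sum_congr rfl fun A _ => ?_
        rw [← Finset.sum_neg_distrib]
        exact Finset.sum_congr rfl fun E _ => by rw [hW2 A B D E]; ring

lemma IIW_contract2 {N : ℕ} (I : Fin N → ℝ) (W : T4 N) (B C : Fin N) :
    (∑ E, I E * (∑ A, I A * W A B E C)) = ∑ A', ∑ C', I A' * I C' * W A' B C' C := by
  calc (∑ E, I E * (∑ A, I A * W A B E C))
      = ∑ E, ∑ A, I A * I E * W A B E C := Finset.sum_congr rfl fun E _ => by
        rw [Finset.mul_sum]; exact Finset.sum_congr rfl fun A _ => by ring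
    _ = ∑ A, ∑ E, I A * I E * W A B E C := Finset.sum_comm

lemma sum_I_lowI {N : ℕ} (g : Fin N → Fin N → ℝ) (I : Fin N → ℝ) :
    (∑ E, I E * (∑ e, g E e * I e)) = ∑ a, ∑ b, g a b * I a * I b :=
  Finset.sum_congr rfl fun E _ => by
    rw [Finset.mul_sum]; exact Finset.sum_congr rfl fun e _ => by ring

lemma sum_mul_pullL {N : ℕ} (K : ℝ) (u v : Fin N → ℝ) :
    (∑ E, u E * (K * v E)) = K * ∑ E, u E * v E := by
  rw [Finset.mul_sum]; exact Finset.sum_congr rfl fun E _ => by ring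

lemma sum_mul_pullR {N : ℕ} (K : ℝ) (u w : Fin N → ℝ) :
    (∑ E, u E * (w E * K)) = (∑ E, u E * w E) * K := by
  rw [Finset.sum_mul]; exact Finset.sum_congr rfl fun E _ => by ring
/-- let `W` be an algebraic Weyl tensor and `ι = g(I,I) ≠ 0`.
If `I^A W_{AB[CD} I_{E]} = 0` then `R_{ABCD} = ι W_{ABCD} + (g∧P)_{ABCD}` with
`P_{BD} = -I^A I^C W_{ABCD}` is an algebraic curvature tensor with
`I^A R_{ABCD} = 0` whose trace-free part is `ι W`. Conversely, if `W` is the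
trace-free part of an algebraic curvature tensor `R` with `I^A R_{ABCD} = 0`,
then `I^A W_{AB[CD} I_{E]} = 0`. -/
theorem weyl_Iperp_characterisation {n : ℕ} (hn : 1 ≤ n)
    (g gi : Fin (n + 2) → Fin (n + 2) → ℝ)
    (hgsymm : ∀ a b, g a b = g b a)
    (hginv : ∀ a b, (∑ c, gi a c * g c b) = if a = b then (1 : ℝ) else 0)
    (I : Fin (n + 2) → ℝ) (ι : ℝ)
    (hι : ι = ∑ a, ∑ b, g a b * I a * I b) (hι0 : ι ≠ 0)
    (W : T4 (n + 2))
    (hWcurv : IsCurv W) (hWtf : ∀ A C, ricciT gi W A C = 0) :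
    ((∀ B C D E,
        (∑ A, I A * W A B C D) * (∑ e, g E e * I e)
          + (∑ A, I A * W A B D E) * (∑ e, g C e * I e)
          + (∑ A, I A * W A B E C) * (∑ e, g D e * I e) = 0) →
      (IsCurv (fun A B C D => ι * W A B C D
            + wedge4 g (fun B' D' => -(∑ A', ∑ C', I A' * I C' * W A' B' C' D')) A B C D)
        ∧ (∀ B C D, (∑ A, I A * (ι * W A B C D
            + wedge4 g (fun B' D' => -(∑ A', ∑ C', I A' * I C' * W A' B' C' D')) A B C D))
              = 0)
        ∧ tfT n g gi (fun A B C D => ι * W A B C D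
            + wedge4 g (fun B' D' => -(∑ A', ∑ C', I A' * I C' * W A' B' C' D')) A B C D)
          = fun A B C D => ι * W A B C D))
    ∧ (∀ R : T4 (n + 2), IsCurv R → (∀ B C D, (∑ A, I A * R A B C D) = 0) →
        W = tfT n g gi R →
        ∀ B C D E,
          (∑ A, I A * W A B C D) * (∑ e, g E e * I e)
            + (∑ A, I A * W A B D E) * (∑ e, g C e * I e)
            + (∑ A, I A * W A B E C) * (∑ e, g D e * I e) = 0) := by

  obtain ⟨hW1, hW2, hW3, hW4⟩ := hWcurv
  obtain ⟨hgisymm, hginv2⟩ := gi_facts g gi hgsymm hginv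
  constructor
  · intro H
    set P : Fin (n + 2) → Fin (n + 2) → ℝ :=
      fun B' D' => -(∑ A', ∑ C', I A' * I C' * W A' B' C' D') with hPdef
    have hPsymm : ∀ a b, P a b = P b a := fun a b => by
      simp only [hPdef]; exact P_symm I W hW3 a b
    have hIP : ∀ C, (∑ A, I A * P A C) = 0 := fun C => by
      simp only [hPdef]; exact IP_zero I W hW1 C
    have key : ∀ B C D, ι * (∑ A, I A * W A B C D)
        + P B D * (∑ e, g C e * I e) - P B C * (∑ e, g D e * I e) = 0 := by
      intro B C D
      have h0 : (∑ E, I E * ((∑ A, I A * W A B C D) * (∑ e, g E e * I e)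
            + (∑ A, I A * W A B D E) * (∑ e, g C e * I e)
            + (∑ A, I A * W A B E C) * (∑ e, g D e * I e))) = 0 :=
        Finset.sum_eq_zero fun E _ => by rw [H B C D E, mul_zero]
      simp only [mul_add, Finset.sum_add_distrib] at h0
      have ea : (∑ E, I E * ((∑ A, I A * W A B C D) * (∑ e, g E e * I e)))
          = (∑ A, I A * W A B C D) * ι := by
        rw [sum_mul_pullL (∑ A, I A * W A B C D) I (fun E => ∑ e, g E e * I e),
          sum_I_lowI g I, ← hι]
      have eb : (∑ E, I E * ((∑ A, I A * W A B D E) * (∑ e, g C e * I e)))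
          = (-(∑ A', ∑ C', I A' * I C' * W A' B C' D)) * (∑ e, g C e * I e) := by
        rw [sum_mul_pullR (∑ e, g C e * I e) I (fun E => ∑ A, I A * W A B D E),
          IIW_contract1 I W hW2 B D]
      have ec : (∑ E, I E * ((∑ A, I A * W A B E C) * (∑ e, g D e * I e)))
          = (∑ A', ∑ C', I A' * I C' * W A' B C' C) * (∑ e, g D e * I e) := by
        rw [sum_mul_pullR (∑ e, g D e * I e) I (fun E => ∑ A, I A * W A B E C),
          IIW_contract2 I W B C]
      rw [ea, eb, ec] at h0
      simp only [hPdef]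
      linear_combination h0
    refine ⟨?_, ?_, ?_⟩
    · exact curv_add_smul ι W (wedge4 g P) ⟨hW1, hW2, hW3, hW4⟩
        (wedge_curv g P hgsymm hPsymm)
    · intro B C D
      have split : (∑ A, I A * (ι * W A B C D + wedge4 g P A B C D))
          = (∑ A, I A * (ι * W A B C D)) + (∑ A, I A * wedge4 g P A B C D) := by
        rw [← Finset.sum_add_distrib]
        exact Finset.sum_congr rfl fun A _ => by rw [mul_add]
      rw [split, sum_mul_pullL ι I (fun A => W A B C D),
        wedge_contract g P I hgsymm B C D, hIP C, hIP D]
      linear_combination key B C D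
    · have hric : ∀ A C, ricciT gi (fun A B C D => ι * W A B C D + wedge4 g P A B C D) A C
          = (∑ b, ∑ d, gi b d * P b d) * g A C + (n : ℝ) * P A C := by
        intro A C
        rw [ricci_addsm gi ι W (wedge4 g P) A C, hWtf A C,
          ricci_wedge g gi P hgsymm hgisymm hginv A C]
        push_cast
        ring
      have hsch := schouten_of n hn g gi P hgsymm hginv _ hric
      funext A B C D
      have hQ : schoutenT n g gi (fun A B C D => ι * W A B C D + wedge4 g P A B C D) = P :=
        funext fun a => funext fun c => hsch a c
      simp only [tfT, hQ]
      ring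
  · intro R hRcurv hIR hWdef B C D E
    set P : Fin (n + 2) → Fin (n + 2) → ℝ := schoutenT n g gi R with hPdef
    have hIric : ∀ C, (∑ A, I A * ricciT gi R A C) = 0 := by
      intro C
      have h1 : ∀ A : Fin (n + 2),
          I A * ricciT gi R A C = ∑ b, ∑ d, gi b d * (I A * R A b C d) := by
        intro A
        rw [ricciT, Finset.mul_sum]
        refine Finset.sum_congr rfl fun b _ => ?_
        rw [Finset.mul_sum]
        exact Finset.sum_congr rfl fun d _ => by ring
      rw [Finset.sum_congr rfl fun A _ => h1 A, Finset.sum_comm]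
      refine Finset.sum_eq_zero fun b _ => ?_
      rw [Finset.sum_comm]
      refine Finset.sum_eq_zero fun d _ => ?_
      rw [← Finset.mul_sum, hIR b C d, mul_zero]
    set μ : ℝ := -(1 / (n : ℝ))
        * ((1 / (2 * ((n : ℝ) + 1))) * ∑ a, ∑ c, gi a c * ricciT gi R a c) with hμ
    have hq : ∀ C, (∑ A, I A * P A C) = μ * (∑ e, g C e * I e) := by
      intro C
      have h2 : ∀ A : Fin (n + 2), I A * P A C
          = (1 / (n : ℝ)) * (I A * ricciT gi R A C) + μ * (g C A * I A) := by
        intro A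
        simp only [hPdef, schoutenT, hμ]
        rw [hgsymm C A]
        ring
      calc (∑ A, I A * P A C)
          = ∑ A, ((1 / (n : ℝ)) * (I A * ricciT gi R A C) + μ * (g C A * I A)) :=
            Finset.sum_congr rfl fun A _ => h2 A
        _ = (1 / (n : ℝ)) * (∑ A, I A * ricciT gi R A C) + μ * (∑ A, g C A * I A) := by
            rw [Finset.sum_add_distrib, Finset.mul_sum, Finset.mul_sum]
        _ = μ * (∑ e, g C e * I e) := by rw [hIric C]; ring
    have hIW : ∀ B C D, (∑ A, I A * W A B C D)
        = (∑ e, g D e * I e) * P B C - (∑ e, g C e * I e) * P B D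
          + μ * (g B C * (∑ e, g D e * I e) - g B D * (∑ e, g C e * I e)) := by
      intro B C D
      have hsplit : (∑ A, I A * W A B C D)
          = (∑ A, I A * R A B C D) - (∑ A, I A * wedge4 g P A B C D) := by
        rw [hWdef]
        simp only [tfT, mul_sub, Finset.sum_sub_distrib, hPdef]
      rw [hsplit, hIR B C D, wedge_contract g P I hgsymm B C D, hq C, hq D]
      ring
    rw [hIW B C D, hIW B D E, hIW B E C]
    ring
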